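/- Let g : X → X be a function on a set X and x_0 ∈ X. If the orbit x_0, g(x_0), g²(x_0), ... eventually reaches a fixed point (the sequence is eventually constant), and all elements of X map into a subset of size N under a shape map σ : X → Y with |Y| ≤ N such that σ(x_t) = σ(x_s) implies x_{t+1} and x_{s+1} have equal shapes thereafter, then the orbit reaches its fixed point within N steps. -/
import Mathlib


theorem stmt_11 {X Y : Type} [Fintype Y] (N : ℕ) (hN : Fintype.card Y ≤ N)
    (g : X → X) (x₀ : X) (σ : X → Y)
    (hfix : ∃ T : ℕ, ∀ t : ℕ, T ≤ t → g^[t] x₀ = g^[T] x₀)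
    (hshape : ∀ a b : X, σ a = σ b → σ (g a) = σ (g b))
    (hshapefix : ∀ a b : X, σ a = σ b → (g a = a ↔ g b = b)) :
    ∀ t : ℕ, N ≤ t → g^[t] x₀ = g^[N] x₀ := by
  obtain ⟨T, hT⟩ := hfix
  set x : ℕ → X := fun t => g^[t] x₀ with hx
  have hstep : ∀ n : ℕ, x (n + 1) = g (x n) := by
    intro n; simp [hx, Function.iterate_succ_apply']
  -- pigeonhole: two equal shapes among x 0, ..., x N
  have hninj : ¬ Function.Injective (fun k : Fin (N + 1) => σ (x k)) := by
    intro hinj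
    have := Fintype.card_le_of_injective _ hinj
    simp only [Fintype.card_fin] at this
    omega
  rw [Function.not_injective_iff] at hninj
  obtain ⟨a, b, hab, hne⟩ := hninj
  obtain ⟨i, j, hij, hjN, hσ⟩ : ∃ i j : ℕ, i < j ∧ j ≤ N ∧ σ (x i) = σ (x j) := by
    rcases lt_or_gt_of_ne (Fin.val_ne_of_ne hne) with h | h
    · exact ⟨a, b, h, by omega, hab⟩
    · exact ⟨b, a, h, by omega, hab.symm⟩
  set d : ℕ := j - i with hd
  have hd1 : 1 ≤ d := by omega
  -- shapes repeat with period d from time i on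
  have key : ∀ k : ℕ, σ (x (i + k)) = σ (x (j + k)) := by
    intro k
    induction k with
    | zero => simpa using hσ
    | succ k ih =>
      have := hshape _ _ ih
      rw [show i + (k + 1) = (i + k) + 1 by omega, show j + (k + 1) = (j + k) + 1 by omega,
        hstep, hstep]
      exact this
  have per : ∀ t : ℕ, i ≤ t → σ (x t) = σ (x (t + d)) := by
    intro t ht
    have := key (t - i)
    rw [show i + (t - i) = t by omega, show j + (t - i) = t + d by omega] at this
    exact this
  have perm : ∀ m t : ℕ, i ≤ t → σ (x t) = σ (x (t + m * d)) := by
    intro m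
    induction m with
    | zero => intro t ht; simp
    | succ m ih =>
      intro t ht
      have h1 := ih t ht
      have h2 := per (t + m * d) (by omega)
      rw [show t + (m + 1) * d = t + m * d + d by ring]
      exact h1.trans h2
  -- fixed points after T
  have hfixT : ∀ s : ℕ, T ≤ s → g (x s) = x s := by
    intro s hs
    have h1 : x (s + 1) = x s := by
      rw [show x (s + 1) = g^[s+1] x₀ from rfl, hT (s + 1) (by omega), ← hT s hs]
    rw [← hstep]; exact h1
  -- all times ≥ i are fixed points
  have hfixi : ∀ t : ℕ, i ≤ t → g (x t) = x t := by
    intro t ht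
    have hσt := perm T t ht
    have hs : T ≤ t + T * d := by
      calc T = T * 1 := by ring
      _ ≤ T * d := Nat.mul_le_mul_left T hd1
      _ ≤ t + T * d := by omega
    exact (hshapefix _ _ hσt).2 (hfixT _ hs)
  have hconst : ∀ t : ℕ, i ≤ t → x t = x i := by
    intro t ht
    induction t with
    | zero =>
      have h0 : i = 0 := by omega
      rw [h0]
    | succ t ih =>
      rcases Nat.lt_or_ge i (t + 1) with h | h
      · have hi : i ≤ t := by omega
        rw [hstep, hfixi t hi, ih hi]
      · have h0 : i = t + 1 := by omega
        rw [h0]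
  intro t ht
  have h1 : x t = x i := hconst t (by omega)
  have h2 : x N = x i := hconst N (by omega)
  show x t = x N
  rw [h1, h2]
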